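/- Every well-defining unit conversion C is consistent: its closure C* is again a unit conversion, i.e., C* satisfies dimensional consistency (u →r v in C* implies dim u = dim v) and functionality (u →r v and u →r' v in C* imply r = r'). -/
import Mathlib


open Finsupp

/-- The positive rationals, as a multiplicative group. -/
abbrev Ratio : Type := {q : ℚ // 0 < q}

/-- Prefixes: the free abelian group over base prefixes `P`. -/
abbrev PrefG (P : Type*) : Type _ := P →₀ ℤ
/-- Root units: the free abelian group over base units `B`. -/
abbrev RootG (B : Type*) : Type _ := B →₀ ℤ
/-- Units: the free abelian group over preunits (prefix, base unit). -/
abbrev UnitG (P B : Type*) : Type _ := ((P →₀ ℤ) × B) →₀ ℤ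

variable {P B D : Type*}

/-- The root of a unit: forget all prefixes. -/
noncomputable def rootU (u : UnitG P B) : RootG B :=
  Finsupp.mapDomain Prod.snd u

/-- Embed a root unit back into the units, with empty prefixes. -/
noncomputable def unrootU (f : RootG B) : UnitG P B :=
  Finsupp.mapDomain (fun b => ((0 : PrefG P), b)) f

/-- Strip all prefixes from a unit. -/
noncomputable def stripU (u : UnitG P B) : UnitG P B := unrootU (rootU u)

/-- The value of a prefix, given values of base prefixes. -/
noncomputable def valP (val₀ : P → Ratio) (f : PrefG P) : Ratio :=
  ∏ p ∈ f.support, val₀ p ^ (f p)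

/-- The prefix value of a unit. -/
noncomputable def pvalU (val₀ : P → Ratio) (g : UnitG P B) : Ratio :=
  ∏ x ∈ g.support, valP val₀ x.1 ^ (g x)

/-- The dimension of a root unit, given dimensions of base units. -/
noncomputable def dimRoot (dim₀ : B → D →₀ ℤ) (f : RootG B) : D →₀ ℤ :=
  ∑ b ∈ f.support, f b • dim₀ b

/-- The dimension of a unit. -/
noncomputable def dimU (dim₀ : B → D →₀ ℤ) (u : UnitG P B) : D →₀ ℤ :=
  dimRoot dim₀ (rootU u)

/-- The combined prefix of a unit. -/
noncomputable def prefU (u : UnitG P B) : PrefG P :=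
  ∑ x ∈ u.support, u x • x.1

/-- Normalization of a unit. -/
noncomputable def normU (u : UnitG P B) : PrefG P × RootG B :=
  (prefU u, rootU u)

/-- Evaluation of a unit. -/
noncomputable def evalU (val₀ : P → Ratio) (u : UnitG P B) : Ratio × RootG B :=
  (pvalU val₀ u, rootU u)

/-- A unit conversion: dimensionally consistent and functional in the ratio. -/
def IsConversion (dim₀ : B → D →₀ ℤ) (C : Set (UnitG P B × Ratio × UnitG P B)) : Prop :=
  (∀ u r v, (u, r, v) ∈ C → dimU dim₀ u = dimU dim₀ v) ∧
  (∀ u r r' v, (u, r, v) ∈ C → (u, r', v) ∈ C → r = r')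

/-- The closure rules for unit conversions. -/
inductive ClosureRel {P B : Type*} (val₀ : P → Ratio)
    (C : Set (UnitG P B × Ratio × UnitG P B)) :
    UnitG P B → Ratio → UnitG P B → Prop
  | base {u r v} : (u, r, v) ∈ C → ClosureRel val₀ C u r v
  | mul {u r v u' r' v'} : ClosureRel val₀ C u r v → ClosureRel val₀ C u' r' v' →
      ClosureRel val₀ C (u + u') (r * r') (v + v')
  | inv {u r v} : ClosureRel val₀ C u r v → ClosureRel val₀ C (-u) r⁻¹ (-v)
  | pe (u : UnitG P B) : ClosureRel val₀ C u (pvalU val₀ u) (stripU u)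
  | pe' (u : UnitG P B) : ClosureRel val₀ C (stripU u) (pvalU val₀ u)⁻¹ u

/-- The conversion closure: the smallest relation containing `C` closed under the rules. -/
def convClosure (val₀ : P → Ratio) (C : Set (UnitG P B × Ratio × UnitG P B)) :
    Set (UnitG P B × Ratio × UnitG P B) :=
  {t | ClosureRel val₀ C t.1 t.2.1 t.2.2}

/-- Convertibility with respect to a conversion. -/
def Convertible (C : Set (UnitG P B × Ratio × UnitG P B)) (u v : UnitG P B) : Prop :=
  ∃ r, (u, r, v) ∈ C

/-- Coherence with respect to a conversion. -/
def Coherent (C : Set (UnitG P B × Ratio × UnitG P B)) (u v : UnitG P B) : Prop :=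
  (u, (1 : Ratio), v) ∈ C

/-- The unit `δu₀` corresponding to a base unit. -/
noncomputable def deltaB (P : Type*) {B : Type*} (u₀ : B) : UnitG P B :=
  Finsupp.single ((0 : PrefG P), u₀) 1

/-- A defining conversion: basic and functional in its first component. -/
def IsDefining (C : Set (UnitG P B × Ratio × UnitG P B)) : Prop :=
  (∀ u r v, (u, r, v) ∈ C → ∃ u₀ : B, u = deltaB P u₀) ∧
  (∀ u r v r' v', (u, r, v) ∈ C → (u, r', v') ∈ C → v = v')

/-- One-step dependency between base units. -/
def Depends (C : Set (UnitG P B × Ratio × UnitG P B)) (u₀ v₀ : B) : Prop :=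
  ∃ r v, (deltaB P u₀, r, v) ∈ C ∧ v₀ ∈ (rootU v).support

/-- The dependency order `>_C`. -/
def DepOrd (C : Set (UnitG P B × Ratio × UnitG P B)) : B → B → Prop :=
  Relation.TransGen (Depends C)

/-- The domain of a defining conversion. -/
def domC (C : Set (UnitG P B × Ratio × UnitG P B)) : Set B :=
  {u₀ : B | ∃ r v, (deltaB P u₀, r, v) ∈ C}


/-- Definition expansion. -/
noncomputable def xpd (C : Set (UnitG P B × Ratio × UnitG P B)) (u₀ : B) :
    Ratio × UnitG P B :=
  haveI := Classical.propDecidable (∃ rv : Ratio × UnitG P B, (deltaB P u₀, rv.1, rv.2) ∈ C)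
  if h : ∃ rv : Ratio × UnitG P B, (deltaB P u₀, rv.1, rv.2) ∈ C then h.choose
  else (1, deltaB P u₀)

/-- The base rewriting map. -/
noncomputable def rwrB (val₀ : P → Ratio) (C : Set (UnitG P B × Ratio × UnitG P B))
    (u₀ : B) : Ratio × RootG B :=
  ((xpd C u₀).1 * pvalU val₀ (xpd C u₀).2, rootU (xpd C u₀).2)

/-- One rewriting step on evaluated units. -/
noncomputable def rwrStep (val₀ : P → Ratio) (C : Set (UnitG P B × Ratio × UnitG P B)) :
    Ratio × RootG B → Ratio × RootG B :=
  fun p => (p.1 * ∏ b ∈ p.2.support, (rwrB val₀ C b).1 ^ (p.2 b),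
            ∑ b ∈ p.2.support, p.2 b • (rwrB val₀ C b).2)


section Aux

variable {P B D : Type*}

lemma rzpow_zero (x : Ratio) : x ^ (0 : ℤ) = 1 := Subtype.ext (zpow_zero _)

lemma rzpow_one (x : Ratio) : x ^ (1 : ℤ) = x := Subtype.ext (zpow_one _)

lemma one_rzpow (n : ℤ) : (1 : Ratio) ^ n = 1 := Subtype.ext (one_zpow n)

lemma rzpow_add (x : Ratio) (m n : ℤ) : x ^ (m + n) = x ^ m * x ^ n :=
  Subtype.ext (zpow_add₀ x.2.ne' m n)

noncomputable def expProd {α : Type*} (f : α → Ratio) (g : α →₀ ℤ) : Ratio :=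
  ∏ a ∈ g.support, f a ^ (g a)

lemma expProd_eq_prod {α : Type*} (f : α → Ratio) (g : α →₀ ℤ) :
    expProd f g = g.prod fun a n => f a ^ n := rfl

lemma expProd_add {α : Type*} (f : α → Ratio) (g g' : α →₀ ℤ) :
    expProd f (g + g') = expProd f g * expProd f g' := by
  simp only [expProd_eq_prod]
  exact Finsupp.prod_add_index' (fun a => rzpow_zero _) (fun a m n => rzpow_add _ m n)

lemma expProd_zero {α : Type*} (f : α → Ratio) : expProd f (0 : α →₀ ℤ) = 1 := by
  simp [expProd]

lemma expProd_neg {α : Type*} (f : α → Ratio) (g : α →₀ ℤ) :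
    expProd f (-g) = (expProd f g)⁻¹ := by
  apply eq_inv_of_mul_eq_one_left
  rw [← expProd_add, neg_add_cancel, expProd_zero]

lemma expProd_single {α : Type*} (f : α → Ratio) (a : α) :
    expProd f (Finsupp.single a 1) = f a := by
  classical
  unfold expProd
  rw [Finsupp.support_single_ne_zero a one_ne_zero, Finset.prod_singleton,
    Finsupp.single_eq_same, rzpow_one]

lemma pvalU_eq_expProd (val₀ : P → Ratio) (g : UnitG P B) :
    pvalU val₀ g = expProd (fun x => valP val₀ x.1) g := rfl

lemma rootU_add (u u' : UnitG P B) : rootU (u + u') = rootU u + rootU u' :=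
  Finsupp.mapDomain_add

lemma rootU_neg (u : UnitG P B) : rootU (-u) = -rootU u :=
  map_neg (Finsupp.mapDomain.addMonoidHom Prod.snd) u

lemma rootU_single (u₀ : B) : rootU (deltaB P u₀) = Finsupp.single u₀ 1 := by
  unfold rootU deltaB
  rw [Finsupp.mapDomain_single]

lemma rootU_unrootU (f : RootG B) : rootU (P := P) (unrootU f) = f := by
  unfold rootU unrootU
  rw [← Finsupp.mapDomain_comp]
  have : (Prod.snd ∘ fun b : B => ((0 : PrefG P), b)) = id := rfl
  rw [this, Finsupp.mapDomain_id]

lemma rootU_stripU (u : UnitG P B) : rootU (stripU u) = rootU u := by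
  unfold stripU; rw [rootU_unrootU]

lemma valP_zero (val₀ : P → Ratio) : valP val₀ (0 : PrefG P) = 1 := by
  simp [valP]

lemma pvalU_unrootU (val₀ : P → Ratio) (f : RootG B) :
    pvalU val₀ (unrootU (P := P) f) = 1 := by
  classical
  apply Finset.prod_eq_one
  intro x hx
  have hx' := Finsupp.mapDomain_support hx
  obtain ⟨b, _, rfl⟩ := Finset.mem_image.mp hx'
  rw [valP_zero, one_rzpow]

lemma pvalU_deltaB (val₀ : P → Ratio) (u₀ : B) :
    pvalU val₀ (deltaB P u₀) = 1 := by
  rw [pvalU_eq_expProd]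
  unfold deltaB
  rw [expProd_single, valP_zero]

lemma dimRoot_eq_sum (dim₀ : B → D →₀ ℤ) (f : RootG B) :
    dimRoot dim₀ f = f.sum fun b n => n • dim₀ b := rfl

lemma dimRoot_add (dim₀ : B → D →₀ ℤ) (f f' : RootG B) :
    dimRoot dim₀ (f + f') = dimRoot dim₀ f + dimRoot dim₀ f' := by
  simp only [dimRoot_eq_sum]
  exact Finsupp.sum_add_index' (fun b => zero_smul ℤ _) (fun b m n => add_smul m n _)

lemma dimRoot_zero (dim₀ : B → D →₀ ℤ) : dimRoot dim₀ (0 : RootG B) = 0 := by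
  simp [dimRoot]

lemma dimRoot_neg (dim₀ : B → D →₀ ℤ) (f : RootG B) :
    dimRoot dim₀ (-f) = -dimRoot dim₀ f := by
  apply eq_neg_of_add_eq_zero_left
  rw [← dimRoot_add, neg_add_cancel, dimRoot_zero]

lemma dimU_add (dim₀ : B → D →₀ ℤ) (u u' : UnitG P B) :
    dimU dim₀ (u + u') = dimU dim₀ u + dimU dim₀ u' := by
  unfold dimU; rw [rootU_add, dimRoot_add]

lemma dimU_neg (dim₀ : B → D →₀ ℤ) (u : UnitG P B) :
    dimU dim₀ (-u) = -dimU dim₀ u := by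
  unfold dimU; rw [rootU_neg, dimRoot_neg]

lemma dimU_stripU (dim₀ : B → D →₀ ℤ) (u : UnitG P B) :
    dimU dim₀ (stripU u) = dimU dim₀ u := by
  unfold dimU; rw [rootU_stripU]

/-- The value of base units, defined by well-founded recursion on the dependency order. -/
noncomputable def phiAux (val₀ : P → Ratio) (C : Set (UnitG P B × Ratio × UnitG P B))
    (hwf : WellFounded (Function.swap (DepOrd C))) : B → Ratio :=
  hwf.fix fun u₀ ih =>
    haveI := Classical.propDecidable (∃ rv : Ratio × UnitG P B, (deltaB P u₀, rv.1, rv.2) ∈ C)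
    if h : ∃ rv : Ratio × UnitG P B, (deltaB P u₀, rv.1, rv.2) ∈ C then
      h.choose.1 * pvalU val₀ h.choose.2 *
        ∏ b ∈ (rootU h.choose.2).support.attach,
          ih b.1 (Relation.TransGen.single ⟨h.choose.1, h.choose.2, h.choose_spec, b.2⟩)
            ^ (rootU h.choose.2) b.1
    else 1

lemma phiAux_eq (val₀ : P → Ratio) (C : Set (UnitG P B × Ratio × UnitG P B))
    (hwf : WellFounded (Function.swap (DepOrd C))) (u₀ : B) :
    phiAux val₀ C hwf u₀ =
      haveI := Classical.propDecidable (∃ rv : Ratio × UnitG P B, (deltaB P u₀, rv.1, rv.2) ∈ C)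
      if h : ∃ rv : Ratio × UnitG P B, (deltaB P u₀, rv.1, rv.2) ∈ C then
        h.choose.1 * pvalU val₀ h.choose.2 * expProd (phiAux val₀ C hwf) (rootU h.choose.2)
      else 1 := by
  conv_lhs => rw [phiAux, WellFounded.fix_eq]
  split
  · congr 1
    unfold expProd
    conv_rhs => rw [← Finset.prod_attach]
    exact Finset.prod_congr rfl fun x _ => rfl
  · rfl

lemma phiAux_spec {dim₀ : B → D →₀ ℤ} (val₀ : P → Ratio)
    {C : Set (UnitG P B × Ratio × UnitG P B)}
    (hC : IsConversion dim₀ C) (hdef : IsDefining C)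
    (hwf : WellFounded (Function.swap (DepOrd C)))
    {u₀ : B} {r : Ratio} {v : UnitG P B} (h : (deltaB P u₀, r, v) ∈ C) :
    phiAux val₀ C hwf u₀ = r * pvalU val₀ v * expProd (phiAux val₀ C hwf) (rootU v) := by
  rw [phiAux_eq]
  have hex : ∃ rv : Ratio × UnitG P B, (deltaB P u₀, rv.1, rv.2) ∈ C := ⟨(r, v), h⟩
  rw [dif_pos hex]
  have hv : hex.choose.2 = v := hdef.2 _ _ _ _ _ hex.choose_spec h
  have hmem : (deltaB P u₀, hex.choose.1, v) ∈ C := by rw [← hv]; exact hex.choose_spec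
  have hr : hex.choose.1 = r := hC.2 _ _ _ _ hmem h
  rw [hv, hr]

/-- The global value function on units. -/
noncomputable def PhiU (val₀ : P → Ratio) (C : Set (UnitG P B × Ratio × UnitG P B))
    (hwf : WellFounded (Function.swap (DepOrd C))) (u : UnitG P B) : Ratio :=
  pvalU val₀ u * expProd (phiAux val₀ C hwf) (rootU u)

lemma PhiU_add (val₀ : P → Ratio) (C : Set (UnitG P B × Ratio × UnitG P B))
    (hwf : WellFounded (Function.swap (DepOrd C))) (u u' : UnitG P B) :
    PhiU val₀ C hwf (u + u') = PhiU val₀ C hwf u * PhiU val₀ C hwf u' := by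
  unfold PhiU
  rw [rootU_add, expProd_add, pvalU_eq_expProd, expProd_add, ← pvalU_eq_expProd,
    ← pvalU_eq_expProd, mul_mul_mul_comm]

lemma PhiU_neg (val₀ : P → Ratio) (C : Set (UnitG P B × Ratio × UnitG P B))
    (hwf : WellFounded (Function.swap (DepOrd C))) (u : UnitG P B) :
    PhiU val₀ C hwf (-u) = (PhiU val₀ C hwf u)⁻¹ := by
  unfold PhiU
  rw [rootU_neg, expProd_neg, pvalU_eq_expProd, expProd_neg, ← pvalU_eq_expProd, mul_inv]

lemma PhiU_stripU (val₀ : P → Ratio) (C : Set (UnitG P B × Ratio × UnitG P B))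
    (hwf : WellFounded (Function.swap (DepOrd C))) (u : UnitG P B) :
    PhiU val₀ C hwf (stripU u) = expProd (phiAux val₀ C hwf) (rootU u) := by
  unfold PhiU stripU
  rw [rootU_unrootU, pvalU_unrootU, one_mul]

lemma closure_key {dim₀ : B → D →₀ ℤ} (val₀ : P → Ratio)
    {C : Set (UnitG P B × Ratio × UnitG P B)}
    (hC : IsConversion dim₀ C) (hdef : IsDefining C)
    (hwf : WellFounded (Function.swap (DepOrd C)))
    {u : UnitG P B} {r : Ratio} {v : UnitG P B} (h : ClosureRel val₀ C u r v) :
    r * PhiU val₀ C hwf v = PhiU val₀ C hwf u := by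
  induction h with
  | base hmem =>
    rename_i u r v
    obtain ⟨u₀, rfl⟩ := hdef.1 _ _ _ hmem
    have hspec := phiAux_spec val₀ hC hdef hwf hmem
    have hδ : PhiU val₀ C hwf (deltaB P u₀) = phiAux val₀ C hwf u₀ := by
      unfold PhiU
      rw [pvalU_deltaB, one_mul, rootU_single, expProd_single]
    rw [hδ, hspec]
    unfold PhiU
    exact (mul_assoc _ _ _).symm
  | mul h1 h2 ih1 ih2 =>
    rw [PhiU_add, PhiU_add, mul_mul_mul_comm, ih1, ih2]
  | inv h ih =>
    rw [PhiU_neg, PhiU_neg, ← mul_inv, ih]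
  | pe u =>
    rw [PhiU_stripU, PhiU]
  | pe' u =>
    rw [PhiU_stripU, PhiU, inv_mul_cancel_left]

end Aux

/-- Every well-defining unit conversion is consistent: its closure is again a
unit conversion. -/
theorem wellDefining_consistent {P B D : Type*} [Finite B] (val₀ : P → Ratio)
    (dim₀ : B → D →₀ ℤ) (C : Set (UnitG P B × Ratio × UnitG P B))
    (hC : IsConversion dim₀ C) (hdef : IsDefining C)
    (hwf : WellFounded (Function.swap (DepOrd C))) :
    IsConversion dim₀ (convClosure val₀ C) := by
  constructor
  · intro u r v h
    have h' : ClosureRel val₀ C u r v := h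
    clear h
    induction h' with
    | base hmem => exact hC.1 _ _ _ hmem
    | mul h1 h2 ih1 ih2 =>
      rw [dimU_add, dimU_add, ih1, ih2]
    | inv h ih => rw [dimU_neg, dimU_neg, ih]
    | pe u => rw [dimU_stripU]
    | pe' u => rw [dimU_stripU]
  · intro u r r' v h h'
    have k1 := closure_key val₀ hC hdef hwf (h : ClosureRel val₀ C u r v)
    have k2 := closure_key val₀ hC hdef hwf (h' : ClosureRel val₀ C u r' v)
    exact mul_right_cancel (k1.trans k2.symm)
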